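/- Let K = ℓ²(ℕ) (indexed from n = 1) and H = K ⊕ K. Let G = {(x, y) ∈ K ⊕ K : y_n = n² x_n for all n}, which is a closed subspace of H (the graph of the unbounded diagonal operator with diagonals (n²)_n), and let G' = {(x, 2x) : x ∈ K} be the graph of the bounded operator 2·I. Then the systems (H; K ⊕ 0, G) and (H; K ⊕ 0, G') are boundedly isomorphic. -/
import Mathlib


/- STATEMENT 15: On K = ℓ²(ℕ) (indexed from 1) with H = K ⊕ K, let
G = {(x, y) : yₙ = n² xₙ for all n} (the graph of the unbounded diagonal operator with
diagonals (n²)ₙ) and G' = {(x, 2x) : x ∈ K}. Then (H; K ⊕ 0, G) and (H; K ⊕ 0, G') are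
boundedly isomorphic. (Indexing: Lean's n : ℕ corresponds to the paper's n + 1.) -/

noncomputable section

abbrev K : Type := lp (fun _ : ℕ => ℂ) 2

/-- The graph of the (possibly unbounded) diagonal operator with diagonals `a`,
as a subspace of `K × K`. -/
def diagGraph (a : ℕ → ℂ) : Submodule ℂ (K × K) where
  carrier := {p | ∀ n, p.2 n = a n * p.1 n}
  add_mem' := by
    intro p q hp hq n
    simp only [Prod.snd_add, Prod.fst_add, lp.coeFn_add, Pi.add_apply, hp n, hq n]
    ring
  zero_mem' := by
    intro n
    simp [lp.coeFn_zero]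
  smul_mem' := by
    intro c p hp n
    simp only [Prod.smul_snd, Prod.smul_fst, lp.coeFn_smul, Pi.smul_apply, hp n, smul_eq_mul]
    ring

open scoped ENNReal

def c (n : ℕ) : ℂ := 1/2 - 1/((n:ℂ)+1)^2

lemma norm_c_le (n : ℕ) : ‖c n‖ ≤ 2 := by
  have h1 : ‖((n:ℂ)+1)^2‖ ≥ 1 := by
    rw [norm_pow]
    have : ‖(n:ℂ)+1‖ = (n:ℝ)+1 := by
      have : ((n:ℂ)+1) = ((n+1 : ℕ) : ℂ) := by push_cast; ring
      rw [this, Complex.norm_natCast]; push_cast; ring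
    rw [this]
    nlinarith [Nat.cast_nonneg (α := ℝ) n]
  calc ‖c n‖ ≤ ‖(1/2 : ℂ)‖ + ‖1/((n:ℂ)+1)^2‖ := norm_sub_le _ _
    _ ≤ 1/2 + 1 := by
        gcongr
        · simp
        · rw [norm_div, norm_one]
          rw [div_le_one (by linarith)]
          linarith
    _ ≤ 2 := by norm_num

lemma memc (y : K) : Memℓp (fun n => c n * y n) 2 := by
  apply memℓp_gen
  have hy : Summable fun n => ‖y n‖ ^ (2:ℝ≥0∞).toReal := (lp.memℓp y).summable (by norm_num)
  refine Summable.of_nonneg_of_le (fun n => by positivity)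
    (fun n => ?_) (hy.mul_left ((2:ℝ) ^ (2:ℝ≥0∞).toReal))
  calc ‖c n * y n‖ ^ (2:ℝ≥0∞).toReal ≤ (2 * ‖y n‖) ^ (2:ℝ≥0∞).toReal := by
        apply Real.rpow_le_rpow (norm_nonneg _) ?_ (by norm_num)
        rw [norm_mul]
        exact mul_le_mul_of_nonneg_right (norm_c_le n) (norm_nonneg _)
    _ = (2:ℝ) ^ (2:ℝ≥0∞).toReal * ‖y n‖ ^ (2:ℝ≥0∞).toReal :=
        Real.mul_rpow (by norm_num) (norm_nonneg _)

def Blin : K →ₗ[ℂ] K where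
  toFun y := ⟨fun n => c n * y n, memc y⟩
  map_add' y z := by
    ext n
    simp only [lp.coeFn_add, Pi.add_apply]
    ring
  map_smul' a y := by
    ext n
    simp only [lp.coeFn_smul, Pi.smul_apply, RingHom.id_apply, smul_eq_mul]
    ring

lemma Blin_apply (y : K) (n : ℕ) : (Blin y) n = c n * y n := rfl

lemma Blin_bound (y : K) : ‖Blin y‖ ≤ 2 * ‖y‖ := by
  have hr : (0:ℝ) < (2:ℝ≥0∞).toReal := by norm_num
  apply lp.norm_le_of_tsum_le hr (by positivity)
  have hy : Summable fun n => ‖y n‖ ^ (2:ℝ≥0∞).toReal := (lp.memℓp y).summable hr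
  have hb : Summable fun n => ‖(Blin y) n‖ ^ (2:ℝ≥0∞).toReal := (lp.memℓp _).summable hr
  calc ∑' n, ‖(Blin y) n‖ ^ (2:ℝ≥0∞).toReal
      ≤ ∑' n, (2:ℝ) ^ (2:ℝ≥0∞).toReal * ‖y n‖ ^ (2:ℝ≥0∞).toReal := by
        apply Summable.tsum_le_tsum ?_ hb (hy.mul_left _)
        intro n
        rw [Blin_apply]
        calc ‖c n * y n‖ ^ (2:ℝ≥0∞).toReal ≤ (2 * ‖y n‖) ^ (2:ℝ≥0∞).toReal := by
              apply Real.rpow_le_rpow (norm_nonneg _) ?_ (by norm_num)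
              rw [norm_mul]
              exact mul_le_mul_of_nonneg_right (norm_c_le n) (norm_nonneg _)
          _ = (2:ℝ) ^ (2:ℝ≥0∞).toReal * ‖y n‖ ^ (2:ℝ≥0∞).toReal :=
              Real.mul_rpow (by norm_num) (norm_nonneg _)
    _ = (2:ℝ) ^ (2:ℝ≥0∞).toReal * ∑' n, ‖y n‖ ^ (2:ℝ≥0∞).toReal := tsum_mul_left
    _ = (2 * ‖y‖) ^ (2:ℝ≥0∞).toReal := by
        rw [← lp.norm_rpow_eq_tsum hr, Real.mul_rpow (by norm_num) (norm_nonneg _)]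

def B : K →L[ℂ] K := Blin.mkContinuous 2 Blin_bound

lemma B_apply (y : K) (n : ℕ) : (B y) n = c n * y n := rfl

def V : (K × K) ≃L[ℂ] (K × K) where
  toFun p := (p.1 + B p.2, p.2)
  invFun p := (p.1 - B p.2, p.2)
  map_add' p q := by simp [Prod.ext_iff]; abel
  map_smul' a p := by simp [Prod.ext_iff, smul_add]
  left_inv p := by simp
  right_inv p := by simp
  continuous_toFun := by fun_prop
  continuous_invFun := by fun_prop


lemma V_apply (p : K × K) : V p = (p.1 + B p.2, p.2) := rfl
lemma V_symm_apply (p : K × K) : V.symm p = (p.1 - B p.2, p.2) := rfl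

lemma mem_diagGraph {a : ℕ → ℂ} {p : K × K} :
    p ∈ diagGraph a ↔ ∀ n, p.2 n = a n * p.1 n := Iff.rfl

lemma ha (n : ℕ) : ((n:ℂ)+1)^2 ≠ 0 := pow_ne_zero 2 (Nat.cast_add_one_ne_zero n)


theorem unbounded_diagonal_graph_boundedly_isomorphic_to_graph_of_two :
    ∃ V : (K × K) ≃L[ℂ] (K × K),
      V '' (((⊤ : Submodule ℂ K).prod (⊥ : Submodule ℂ K)) : Set (K × K)) =
        (((⊤ : Submodule ℂ K).prod (⊥ : Submodule ℂ K)) : Set (K × K)) ∧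
      V '' ((diagGraph fun n : ℕ => ((n : ℂ) + 1) ^ 2) : Set (K × K)) =
        ((diagGraph fun _ : ℕ => (2 : ℂ)) : Set (K × K)) := by
  refine ⟨V, ?_, ?_⟩
  · ext p
    simp only [Set.mem_image, SetLike.mem_coe, Submodule.mem_prod, Submodule.mem_top,
      Submodule.mem_bot, true_and]
    constructor
    · rintro ⟨q, hq, rfl⟩
      rw [V_apply]
      exact hq
    · intro hp
      refine ⟨p, hp, ?_⟩
      rw [V_apply, hp]
      simp [Prod.ext_iff, hp]
  · ext p
    simp only [Set.mem_image, SetLike.mem_coe]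
    constructor
    · rintro ⟨q, hq, rfl⟩
      rw [mem_diagGraph] at hq ⊢
      intro n
      have h := hq n
      rw [V_apply]
      simp only [lp.coeFn_add, Pi.add_apply, B_apply, c]
      rw [h]
      have := ha n
      field_simp
      ring
    · intro hp
      rw [mem_diagGraph] at hp
      refine ⟨V.symm p, ?_, V.apply_symm_apply p⟩
      rw [mem_diagGraph]
      intro n
      have h := hp n
      rw [V_symm_apply]
      simp only [lp.coeFn_sub, Pi.sub_apply, B_apply, c]
      rw [h]
      have := ha n
      field_simp
      ring

end
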